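/- The reverse of the quantifier-elimination rewrite relation → on formulas is well-founded; in particular, → is terminating: there is no infinite sequence F₀ → F₁ → F₂ → … of rewrite steps. -/

import Mathlib

mutual
  /-- Terms of first-order logic extended with Hilbert's ε-operator,
  in de Bruijn representation (so formulas are automatically identified up
  to renaming of bound variables). -/
  inductive Tm : Type
    | var : ℕ → Tm
    | fn : ℕ → (k : ℕ) → (Fin k → Tm) → Tm
    | eps : Fm → Tm
  /-- Formulas; `ex F`, `all F` and `Tm.eps F` bind de Bruijn index 0 of `F`. -/
  inductive Fm : Type
    | pred : ℕ → (k : ℕ) → (Fin k → Tm) → Fm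
    | not : Fm → Fm
    | or : Fm → Fm → Fm
    | and : Fm → Fm → Fm
    | imp : Fm → Fm → Fm
    | ex : Fm → Fm
    | all : Fm → Fm
end

/-- Lifting a renaming under a binder. -/
def upRen (r : ℕ → ℕ) : ℕ → ℕ
  | 0 => 0
  | n + 1 => r n + 1

mutual
  /-- Renaming of free variables in a term. -/
  def renT (r : ℕ → ℕ) : Tm → Tm
    | .var i => .var (r i)
    | .fn f k a => .fn f k (fun i => renT r (a i))
    | .eps F => .eps (renF (upRen r) F)
  /-- Renaming of free variables in a formula. -/
  def renF (r : ℕ → ℕ) : Fm → Fm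
    | .pred p k a => .pred p k (fun i => renT r (a i))
    | .not F => .not (renF r F)
    | .or F G => .or (renF r F) (renF r G)
    | .and F G => .and (renF r F) (renF r G)
    | .imp F G => .imp (renF r F) (renF r G)
    | .ex F => .ex (renF (upRen r) F)
    | .all F => .all (renF (upRen r) F)
end

/-- Lifting a substitution under a binder. -/
def upSub (σ : ℕ → Tm) : ℕ → Tm
  | 0 => .var 0
  | n + 1 => renT Nat.succ (σ n)

mutual
  /-- Capture-avoiding simultaneous substitution on terms. -/
  def subT (σ : ℕ → Tm) : Tm → Tm
    | .var i => σ i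
    | .fn f k a => .fn f k (fun i => subT σ (a i))
    | .eps F => .eps (subF (upSub σ) F)
  /-- Capture-avoiding simultaneous substitution on formulas. -/
  def subF (σ : ℕ → Tm) : Fm → Fm
    | .pred p k a => .pred p k (fun i => subT σ (a i))
    | .not F => .not (subF σ F)
    | .or F G => .or (subF σ F) (subF σ G)
    | .and F G => .and (subF σ F) (subF σ G)
    | .imp F G => .imp (subF σ F) (subF σ G)
    | .ex F => .ex (subF (upSub σ) F)
    | .all F => .all (subF (upSub σ) F)
end

/-- `inst1 F t` is `F{x ↦ t}` for the variable `x` bound just outside `F`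
(de Bruijn index 0). -/
def inst1 (F : Fm) (t : Tm) : Fm :=
  subF (fun n => match n with | 0 => t | n + 1 => .var n) F

mutual
  /-- The variable with de Bruijn index `n` occurs free in the term. -/
  def freeT (n : ℕ) : Tm → Prop
    | .var i => i = n
    | .fn _ _ a => ∃ i, freeT n (a i)
    | .eps F => freeF (n + 1) F
  /-- The variable with de Bruijn index `n` occurs free in the formula. -/
  def freeF (n : ℕ) : Fm → Prop
    | .pred _ _ a => ∃ i, freeT n (a i)
    | .not F => freeF n F
    | .or F G => freeF n F ∨ freeF n G
    | .and F G => freeF n F ∨ freeF n G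
    | .imp F G => freeF n F ∨ freeF n G
    | .ex F => freeF (n + 1) F
    | .all F => freeF (n + 1) F
end

mutual
  /-- Number of occurrences of quantifiers (∃ and ∀, but not ε) in a term. -/
  def qcT : Tm → ℕ
    | .var _ => 0
    | .fn _ _ a => ∑ i, qcT (a i)
    | .eps F => qcF F
  /-- Number of occurrences of quantifiers (∃ and ∀, but not ε) in a formula. -/
  def qcF : Fm → ℕ
    | .pred _ _ a => ∑ i, qcT (a i)
    | .not F => qcF F
    | .or F G => qcF F + qcF G
    | .and F G => qcF F + qcF G
    | .imp F G => qcF F + qcF G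
    | .ex F => qcF F + 1
    | .all F => qcF F + 1
end

/-- Quantifier symbols. -/
inductive Quant : Type
  | ex
  | all

/-- `mkQ Q A` is the quantified formula `Qx. A`. -/
def mkQ : Quant → Fm → Fm
  | .ex, A => .ex A
  | .all, A => .all A

/-- `negQ Q A` is `¬^Q A`: `¬A` for `Q = ∀` and `A` for `Q = ∃`. -/
def negQ : Quant → Fm → Fm
  | .ex, A => A
  | .all, A => .not A

/-- `qeRedex Q A` is `A{x ↦ εx. ¬^Q A}`, the contractum of the redex `Qx. A`. -/
def qeRedex (Q : Quant) (A : Fm) : Fm := inst1 A (.eps (negQ Q A))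

mutual
  /-- One rewrite step inside a term, where each rewritten quantified subformula
  `Qx. A` is required to satisfy the side condition `P A`. -/
  inductive StepT (P : Fm → Prop) : Tm → Tm → Prop
    | fn {f k} {a : Fin k → Tm} {j : Fin k} {t' : Tm} :
        StepT P (a j) t' → StepT P (.fn f k a) (.fn f k (Function.update a j t'))
    | eps {F F'} : StepF P F F' → StepT P (.eps F) (.eps F')
  /-- One rewrite step on formulas: replace one occurrence of a subformula
  `Qx. A` (with `P A`) by `A{x ↦ εx. ¬^Q A}`. -/
  inductive StepF (P : Fm → Prop) : Fm → Fm → Prop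
    | root {Q A} : P A → StepF P (mkQ Q A) (qeRedex Q A)
    | pred {p k} {a : Fin k → Tm} {j : Fin k} {t' : Tm} :
        StepT P (a j) t' → StepF P (.pred p k a) (.pred p k (Function.update a j t'))
    | not {F F'} : StepF P F F' → StepF P (.not F) (.not F')
    | orL {F F' G} : StepF P F F' → StepF P (.or F G) (.or F' G)
    | orR {F G G'} : StepF P G G' → StepF P (.or F G) (.or F G')
    | andL {F F' G} : StepF P F F' → StepF P (.and F G) (.and F' G)
    | andR {F G G'} : StepF P G G' → StepF P (.and F G) (.and F G')
    | impL {F F' G} : StepF P F F' → StepF P (.imp F G) (.imp F' G)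
    | impR {F G G'} : StepF P G G' → StepF P (.imp F G) (.imp F G')
    | ex {F F'} : StepF P F F' → StepF P (.ex F) (.ex F')
    | all {F F'} : StepF P F F' → StepF P (.all F) (.all F')
end

/-- The quantifier-elimination rewrite relation `→` on formulas. -/
def Step : Fm → Fm → Prop := StepF (fun _ => True)

/-- `→₀`: the steps rewriting a vacuous quantifier (bound variable not free in the body). -/
def Step0 : Fm → Fm → Prop := StepF (fun A => ¬ freeF 0 A)

/-- `→₁`: the steps rewriting a non-vacuous quantifier. -/
def Step1 : Fm → Fm → Prop := StepF (fun A => freeF 0 A)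

/-- `→ℐ`: the innermost steps, whose rewritten subformula `Qx. A` contains no
quantifier other than the outermost `Q`. -/
def StepI : Fm → Fm → Prop := StepF (fun A => qcF A = 0)

/-!
Interpret formulas in `ℕ`, under a valuation `ν` of the free variables: binary connectives
add, `εx. A` is worth `A` with `x` valued at `0`, and `Qx. A` is worth one more than `A` with
`x` valued at the worth of `εx. ¬^Q A`. Since the weight commutes with substitution, the
contractum `A{x ↦ εx. ¬^Q A}` of a redex `Qx. A` weighs exactly one less than the redex.
The weight is monotone in the valuation, so a strict decrease inside a context survives the
context, even under a binder, where the value assigned to the bound variable decreases too.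
-/

def scons {α : Type*} (a : α) (f : ℕ → α) : ℕ → α
  | 0 => a
  | n + 1 => f n

theorem scons_comp_upRen {α : Type*} (a : α) (f : ℕ → α) (r : ℕ → ℕ) :
    scons a f ∘ upRen r = scons a (f ∘ r) := by
  funext n; cases n <;> rfl

theorem scons_le_scons {α : Type*} [Preorder α] {a b : α} {f g : ℕ → α} (hab : a ≤ b)
    (hfg : f ≤ g) : scons a f ≤ scons b g := by
  intro n; cases n; exacts [hab, hfg _]

theorem Finset.sum_comp_update_lt {ι β M : Type*} [Fintype ι] [DecidableEq ι]
    [AddCommMonoid M] [PartialOrder M] [IsOrderedCancelAddMonoid M]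
    (g : β → M) (a : ι → β) (j : ι) {b : β} (h : g b < g (a j)) :
    ∑ i, g (Function.update a j b i) < ∑ i, g (a i) := by
  refine Finset.sum_lt_sum (fun i _ => ?_) ⟨j, Finset.mem_univ j, by simpa using h⟩
  rcases eq_or_ne i j with rfl | hij
  · simpa using h.le
  · simp [Function.update_of_ne hij]

mutual
  def weightT : Tm → (ℕ → ℕ) → ℕ
    | .var i, ν => ν i
    | .fn _ _ a, ν => ∑ i, weightT (a i) ν
    | .eps F, ν => weightF F (scons 0 ν)
  def weightF : Fm → (ℕ → ℕ) → ℕ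
    | .pred _ _ a, ν => ∑ i, weightT (a i) ν
    | .not F, ν => weightF F ν
    | .or F G, ν => weightF F ν + weightF G ν
    | .and F G, ν => weightF F ν + weightF G ν
    | .imp F G, ν => weightF F ν + weightF G ν
    | .ex F, ν => weightF F (scons (weightF F (scons 0 ν)) ν) + 1
    | .all F, ν => weightF F (scons (weightF F (scons 0 ν)) ν) + 1
end

mutual
  theorem weightT_renT : ∀ (t : Tm) (r ν : ℕ → ℕ), weightT (renT r t) ν = weightT t (ν ∘ r)
    | .var _, _, _ => rfl
    | .fn _ _ a, r, ν => Finset.sum_congr rfl fun i _ => weightT_renT (a i) r ν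
    | .eps F, r, ν => by
        simp only [renT, weightT]
        rw [weightF_renF F, scons_comp_upRen]
  theorem weightF_renF : ∀ (F : Fm) (r ν : ℕ → ℕ), weightF (renF r F) ν = weightF F (ν ∘ r)
    | .pred _ _ a, r, ν => Finset.sum_congr rfl fun i _ => weightT_renT (a i) r ν
    | .not F, r, ν => weightF_renF F r ν
    | .or F G, r, ν | .and F G, r, ν | .imp F G, r, ν => by
        simp only [renF, weightF, weightF_renF F, weightF_renF G]
    | .ex F, r, ν | .all F, r, ν => by
        simp only [renF, weightF]
        rw [weightF_renF F, scons_comp_upRen, weightF_renF F, scons_comp_upRen]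
end

theorem weightT_upSub (σ : ℕ → Tm) (v : ℕ) (ν : ℕ → ℕ) :
    (fun n => weightT (upSub σ n) (scons v ν)) = scons v (fun n => weightT (σ n) ν) := by
  funext n
  cases n with
  | zero => rfl
  | succ n => exact weightT_renT (σ n) Nat.succ (scons v ν)

mutual
  theorem weightT_subT : ∀ (t : Tm) (σ : ℕ → Tm) (ν : ℕ → ℕ),
      weightT (subT σ t) ν = weightT t (fun n => weightT (σ n) ν)
    | .var _, _, _ => rfl
    | .fn _ _ a, σ, ν => Finset.sum_congr rfl fun i _ => weightT_subT (a i) σ ν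
    | .eps F, σ, ν => by
        simp only [subT, weightT]
        rw [weightF_subF F, weightT_upSub]
  theorem weightF_subF : ∀ (F : Fm) (σ : ℕ → Tm) (ν : ℕ → ℕ),
      weightF (subF σ F) ν = weightF F (fun n => weightT (σ n) ν)
    | .pred _ _ a, σ, ν => Finset.sum_congr rfl fun i _ => weightT_subT (a i) σ ν
    | .not F, σ, ν => weightF_subF F σ ν
    | .or F G, σ, ν | .and F G, σ, ν | .imp F G, σ, ν => by
        simp only [subF, weightF, weightF_subF F, weightF_subF G]
    | .ex F, σ, ν | .all F, σ, ν => by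
        simp only [subF, weightF]
        rw [weightF_subF F, weightT_upSub, weightF_subF F, weightT_upSub]
end

mutual
  theorem weightT_mono : ∀ t : Tm, Monotone (weightT t)
    | .var i, _, _, h => h i
    | .fn _ _ a, _, _, h => Finset.sum_le_sum fun i _ => weightT_mono (a i) h
    | .eps F, _, _, h => weightF_mono F (scons_le_scons le_rfl h)
  theorem weightF_mono : ∀ F : Fm, Monotone (weightF F)
    | .pred _ _ a, _, _, h => Finset.sum_le_sum fun i _ => weightT_mono (a i) h
    | .not F, _, _, h => weightF_mono F h
    | .or F G, _, _, h | .and F G, _, _, h | .imp F G, _, _, h =>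
        Nat.add_le_add (weightF_mono F h) (weightF_mono G h)
    | .ex F, _, _, h | .all F, _, _, h =>
        Nat.add_le_add_right
          (weightF_mono F (scons_le_scons (weightF_mono F (scons_le_scons le_rfl h)) h)) 1
end

theorem weightF_mkQ (Q : Quant) (A : Fm) (ν : ℕ → ℕ) :
    weightF (mkQ Q A) ν = weightF A (scons (weightF A (scons 0 ν)) ν) + 1 := by
  cases Q <;> rfl

theorem weightF_negQ (Q : Quant) (A : Fm) (ν : ℕ → ℕ) : weightF (negQ Q A) ν = weightF A ν := by
  cases Q <;> rfl

theorem weightF_qeRedex (Q : Quant) (A : Fm) (ν : ℕ → ℕ) :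
    weightF (qeRedex Q A) ν = weightF A (scons (weightF A (scons 0 ν)) ν) := by
  rw [qeRedex, inst1, weightF_subF]
  congr 1
  funext n
  cases n with
  | zero => exact weightF_negQ Q A (scons 0 ν)
  | succ n => rfl

theorem weightF_qeRedex_lt_mkQ (Q : Quant) (A : Fm) (ν : ℕ → ℕ) :
    weightF (qeRedex Q A) ν < weightF (mkQ Q A) ν := by
  rw [weightF_mkQ, weightF_qeRedex]
  exact Nat.lt_succ_self _

theorem weightF_binder_lt {F F' : Fm} (h : ∀ ν, weightF F' ν < weightF F ν) (ν : ℕ → ℕ) :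
    weightF F' (scons (weightF F' (scons 0 ν)) ν) < weightF F (scons (weightF F (scons 0 ν)) ν) :=
  calc weightF F' (scons (weightF F' (scons 0 ν)) ν)
      ≤ weightF F' (scons (weightF F (scons 0 ν)) ν) :=
        weightF_mono F' (scons_le_scons (h _).le le_rfl)
    _ < weightF F (scons (weightF F (scons 0 ν)) ν) := h _

mutual
  theorem StepT.weightT_lt {P : Fm → Prop} :
      ∀ {t t' : Tm}, StepT P t t' → ∀ ν, weightT t' ν < weightT t ν
    | _, _, .fn (a := a) (j := j) h, ν =>
        Finset.sum_comp_update_lt (weightT · ν) a j (StepT.weightT_lt h ν)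
    | _, _, .eps h, ν => StepF.weightF_lt h (scons 0 ν)
  theorem StepF.weightF_lt {P : Fm → Prop} :
      ∀ {F F' : Fm}, StepF P F F' → ∀ ν, weightF F' ν < weightF F ν
    | _, _, .root (Q := Q) (A := A) _, ν => weightF_qeRedex_lt_mkQ Q A ν
    | _, _, .pred (a := a) (j := j) h, ν =>
        Finset.sum_comp_update_lt (weightT · ν) a j (StepT.weightT_lt h ν)
    | _, _, .not h, ν => StepF.weightF_lt h ν
    | _, _, .orL h, ν | _, _, .andL h, ν | _, _, .impL h, ν =>
        Nat.add_lt_add_right (StepF.weightF_lt h ν) _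
    | _, _, .orR h, ν | _, _, .andR h, ν | _, _, .impR h, ν =>
        Nat.add_lt_add_left (StepF.weightF_lt h ν) _
    | _, _, .ex h, ν | _, _, .all h, ν =>
        Nat.add_lt_add_right (weightF_binder_lt (StepF.weightF_lt h) ν) 1
end

/-- the paper's main termination theorem: the reverse of the
quantifier-elimination rewrite relation `→` is well-founded; in particular `→`
is terminating. -/
theorem stmt12 :
    WellFounded (fun G F : Fm => Step F G) ∧
    ¬ ∃ f : ℕ → Fm, ∀ i : ℕ, Step (f i) (f (i + 1)) := by
  have hwf : WellFounded (fun G F : Fm => Step F G) :=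
    Subrelation.wf (fun h => StepF.weightF_lt h 0) (measure fun F => weightF F 0).wf
  exact ⟨hwf, fun ⟨f, hf⟩ => (wellFounded_iff_isEmpty_descending_chain.1 hwf).elim ⟨f, hf⟩⟩
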